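/- Assume the integrated solutions with the standard initial values exist for z = 0 and for a given z ∈ ℂ. Let R_K be the 2×2 matrix with entries (R_K)₁₁ = θ(0,b), (R_K)₁₂ = φ(0,b), (R_K)₂₁ = θ^{[1]}(0,b), (R_K)₂₂ = φ^{[1]}(0,b). For a pair (g, g^{[1]}) define V₁(g) = g(b) − (R_K)₁₁ g(a) − (R_K)₁₂ g^{[1]}(a) and V₂(g) = g^{[1]}(b) − (R_K)₂₁ g(a) − (R_K)₂₂ g^{[1]}(a), and set F_K(z) = V₁(θ(z,·)) V₂(φ(z,·)) − V₂(θ(z,·)) V₁(φ(z,·)). Then F_K(z) = −2 (D_K(z) − 1), where D_K(z) = ½[φ^{[1]}(0,b)θ(z,b) + θ(0,b)φ^{[1]}(z,b) − φ(0,b)θ^{[1]}(z,b) − θ^{[1]}(0,b)φ(z,b)]. -/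

import Mathlib

open MeasureTheory intervalIntegral Set

/-- Hypothesis 3.1: `r > 0` a.e. with `r ∈ L¹((a,b))`, `p > 0` a.e. with `1/p ∈ L¹((a,b))`,
and `q ∈ L¹((a,b))` (all real-valued). -/
def Hyp31 (a b : ℝ) (p q r : ℝ → ℝ) : Prop :=
  (∀ᵐ x ∂(volume.restrict (Ioo a b)), 0 < r x) ∧
  IntegrableOn r (Ioo a b) ∧
  (∀ᵐ x ∂(volume.restrict (Ioo a b)), 0 < p x) ∧
  IntegrableOn (fun x => 1 / p x) (Ioo a b) ∧
  IntegrableOn q (Ioo a b)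

/-- `(u, u1)` is an integrated solution of `-(p u')' + q u = z r u` on `[a,b]`
with initial values `u(a) = ua`, `u^[1](a) = u1a`. -/
def IsIntegratedSol (a b : ℝ) (p q r : ℝ → ℝ) (z : ℂ) (u u1 : ℝ → ℂ)
    (ua u1a : ℂ) : Prop :=
  IntervalIntegrable (fun t => u1 t / (p t : ℂ)) volume a b ∧
  IntervalIntegrable (fun t => ((q t : ℂ) - z * (r t : ℂ)) * u t) volume a b ∧
  (∀ x ∈ Icc a b, u x = ua + ∫ t in a..x, u1 t / (p t : ℂ)) ∧
  (∀ x ∈ Icc a b, u1 x = u1a + ∫ t in a..x, ((q t : ℂ) - z * (r t : ℂ)) * u t)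

/-!
Expanding `F_K(z)` with `θ(z,a) = 1`, `θ^{[1]}(z,a) = 0`, `φ(z,a) = 0`, `φ^{[1]}(z,a) = 1` leaves a
polynomial in the boundary values at `b` which equals `-2 (D_K(z) - 1)` as soon as the Wronskians
`θ φ^{[1]} - θ^{[1]} φ` at `b`, for the spectral parameters `z` and `0`, both equal `1`.

The Wronskian of two integrated solutions is constant: integrating by parts for primitives of
integrable functions, `(u v^{[1]})(b)` and `(u^{[1]} v)(b)` gain the same integral
`∫ (u^{[1]} v^{[1]} / p + (q - z r) u v)`. Integration by parts in turn is Fubini's theorem on the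
square `(a,b]²`, split along its diagonal.
-/

section Primitives

variable {𝕜 : Type*} [RCLike 𝕜] {a b : ℝ} {f g F G : ℝ → 𝕜}

theorem setIntegral_snd_le_fst_eq (hfg : Integrable (fun z : ℝ × ℝ => f z.1 * g z.2)
      ((volume.restrict (Ioc a b)).prod (volume.restrict (Ioc a b)))) :
    ∫ z in {z : ℝ × ℝ | z.2 ≤ z.1}, f z.1 * g z.2
        ∂((volume.restrict (Ioc a b)).prod (volume.restrict (Ioc a b)))
      = ∫ x in Ioc a b, f x * ∫ t in Ioc a x, g t := by
  have hS : MeasurableSet {z : ℝ × ℝ | z.2 ≤ z.1} := measurableSet_le measurable_snd measurable_fst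
  rw [← MeasureTheory.integral_indicator hS, integral_prod _ (hfg.indicator hS)]
  refine setIntegral_congr_fun measurableSet_Ioc fun x hx => ?_
  have hslice : Iic x ∩ Ioc a b = Ioc a x := by
    ext t; simp only [mem_inter_iff, mem_Iic, mem_Ioc]; constructor <;> intro h <;> grind
  simp only [indicator_apply, mem_ofPred_eq]
  rw [← MeasureTheory.integral_const_mul, ← hslice, ← Measure.restrict_restrict measurableSet_Iic,
    ← MeasureTheory.integral_indicator measurableSet_Iic]
  simp only [indicator_apply, mem_Iic]

theorem setIntegral_fst_lt_snd_eq (hfg : Integrable (fun z : ℝ × ℝ => f z.1 * g z.2)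
      ((volume.restrict (Ioc a b)).prod (volume.restrict (Ioc a b)))) :
    ∫ z in {z : ℝ × ℝ | z.1 < z.2}, f z.1 * g z.2
        ∂((volume.restrict (Ioc a b)).prod (volume.restrict (Ioc a b)))
      = ∫ y in Ioc a b, (∫ t in Ioc a y, f t) * g y := by
  have hS : MeasurableSet {z : ℝ × ℝ | z.1 < z.2} := measurableSet_lt measurable_fst measurable_snd
  rw [← MeasureTheory.integral_indicator hS, integral_prod_symm _ (hfg.indicator hS)]
  refine setIntegral_congr_fun measurableSet_Ioc fun y hy => ?_
  have hslice : Iio y ∩ Ioc a b = Ioo a y := by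
    ext t; simp only [mem_inter_iff, mem_Iio, mem_Ioc, mem_Ioo]; constructor <;> intro h <;> grind
  simp only [indicator_apply, mem_ofPred_eq]
  rw [integral_Ioc_eq_integral_Ioo (x := a) (y := y), ← MeasureTheory.integral_mul_const,
    ← hslice, ← Measure.restrict_restrict measurableSet_Iio,
    ← MeasureTheory.integral_indicator measurableSet_Iio]
  simp only [indicator_apply, mem_Iio]

theorem integral_Ioc_mul_integral_Ioc (hf : IntegrableOn f (Ioc a b))
    (hg : IntegrableOn g (Ioc a b)) :
    (∫ x in Ioc a b, f x) * (∫ x in Ioc a b, g x)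
      = (∫ x in Ioc a b, f x * ∫ t in Ioc a x, g t)
        + ∫ x in Ioc a b, (∫ t in Ioc a x, f t) * g x := by
  have hfg : Integrable (fun z : ℝ × ℝ => f z.1 * g z.2)
      ((volume.restrict (Ioc a b)).prod (volume.restrict (Ioc a b))) := hf.mul_prod hg
  have hcompl : {z : ℝ × ℝ | z.2 ≤ z.1}ᶜ = {z | z.1 < z.2} := by ext; simp
  rw [← integral_prod_mul, ← setIntegral_snd_le_fst_eq hfg,
    ← setIntegral_fst_lt_snd_eq hfg, ← hcompl,
    integral_add_compl (measurableSet_le measurable_snd measurable_fst) hfg]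

theorem integral_mul_add_mul_eq_sub_of_eq_add_integral (hab : a ≤ b)
    (hf : IntervalIntegrable f volume a b) (hg : IntervalIntegrable g volume a b)
    (hF : ∀ x ∈ Icc a b, F x = F a + ∫ t in a..x, f t)
    (hG : ∀ x ∈ Icc a b, G x = G a + ∫ t in a..x, g t) :
    ∫ x in a..b, f x * G x + F x * g x = F b * G b - F a * G a := by
  have hFc : ContinuousOn (fun x => ∫ t in a..x, f t) (uIcc a b) :=
    continuousOn_primitive_interval' hf left_mem_uIcc
  have hGc : ContinuousOn (fun x => ∫ t in a..x, g t) (uIcc a b) :=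
    continuousOn_primitive_interval' hg left_mem_uIcc
  have htriangle : (∫ x in a..b, f x) * (∫ x in a..b, g x)
      = (∫ x in a..b, f x * ∫ t in a..x, g t) + ∫ x in a..b, (∫ t in a..x, f t) * g x := by
    simp only [integral_of_le hab]
    rw [integral_Ioc_mul_integral_Ioc ((intervalIntegrable_iff_integrableOn_Ioc_of_le hab).1 hf)
      ((intervalIntegrable_iff_integrableOn_Ioc_of_le hab).1 hg)]
    congr 1 <;> refine setIntegral_congr_fun measurableSet_Ioc fun x hx => ?_ <;>
      simp only [integral_of_le hx.1.le]
  have hb : b ∈ Icc a b := ⟨hab, le_rfl⟩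
  calc ∫ x in a..b, f x * G x + F x * g x
      = ∫ x in a..b, (G a * f x + F a * g x)
          + (f x * (∫ t in a..x, g t) + (∫ t in a..x, f t) * g x) := by
        refine integral_congr fun x hx => ?_
        rw [uIcc_of_le hab] at hx
        rw [hF x hx, hG x hx]
        ring
    _ = G a * (∫ x in a..b, f x) + F a * (∫ x in a..b, g x)
          + ((∫ x in a..b, f x * ∫ t in a..x, g t) + ∫ x in a..b, (∫ t in a..x, f t) * g x) := by
        rw [integral_add ((hf.const_mul _).add (hg.const_mul _))
            ((hf.mul_continuousOn hGc).add (hg.continuousOn_mul hFc)),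
          integral_add (hf.const_mul _) (hg.const_mul _),
          integral_add (hf.mul_continuousOn hGc) (hg.continuousOn_mul hFc),
          intervalIntegral.integral_const_mul, intervalIntegral.integral_const_mul]
    _ = F b * G b - F a * G a := by
        rw [← htriangle, hF b hb, hG b hb]
        ring

end Primitives

namespace IsIntegratedSol

variable {a b : ℝ} {p q r : ℝ → ℝ} {z : ℂ} {u u1 v v1 : ℝ → ℂ} {ua u1a va v1a : ℂ}

theorem apply_left (hab : a ≤ b) (hu : IsIntegratedSol a b p q r z u u1 ua u1a) :
    u a = ua ∧ u1 a = u1a := by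
  have ha : a ∈ Icc a b := ⟨le_rfl, hab⟩
  simpa using And.intro (hu.2.2.1 a ha) (hu.2.2.2 a ha)

theorem wronskian_eq (hab : a ≤ b) (hu : IsIntegratedSol a b p q r z u u1 ua u1a)
    (hv : IsIntegratedSol a b p q r z v v1 va v1a) :
    u b * v1 b - u1 b * v b = ua * v1a - u1a * va := by
  obtain ⟨rfl, rfl⟩ := hu.apply_left hab
  obtain ⟨rfl, rfl⟩ := hv.apply_left hab
  obtain ⟨hu', hu1', hu_eq, hu1_eq⟩ := hu
  obtain ⟨hv', hv1', hv_eq, hv1_eq⟩ := hv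
  have huv1 := integral_mul_add_mul_eq_sub_of_eq_add_integral hab hu' hv1' hu_eq hv1_eq
  have hu1v := integral_mul_add_mul_eq_sub_of_eq_add_integral hab hu1' hv' hu1_eq hv_eq
  linear_combination huv1.symm.trans ((integral_congr fun x _ => by ring).trans hu1v)

end IsIntegratedSol

theorem statement6_general (a b : ℝ) (hab : a < b) (p q r : ℝ → ℝ)
    (z : ℂ)
    (θ0 θ01 φ0 φ01 θ θ1 φ φ1 : ℝ → ℂ)
    (hθ0 : IsIntegratedSol a b p q r 0 θ0 θ01 1 0)
    (hφ0 : IsIntegratedSol a b p q r 0 φ0 φ01 0 1)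
    (hθ : IsIntegratedSol a b p q r z θ θ1 1 0)
    (hφ : IsIntegratedSol a b p q r z φ φ1 0 1)
    (V1 V2 : (ℝ → ℂ) → (ℝ → ℂ) → ℂ)
    (hV1 : ∀ g g1 : ℝ → ℂ, V1 g g1 = g b - θ0 b * g a - φ0 b * g1 a)
    (hV2 : ∀ g g1 : ℝ → ℂ, V2 g g1 = g1 b - θ01 b * g a - φ01 b * g1 a)
    (FK DK : ℂ)
    (hFK : FK = V1 θ θ1 * V2 φ φ1 - V2 θ θ1 * V1 φ φ1)
    (hDK : DK = (φ01 b * θ b + θ0 b * φ1 b - φ0 b * θ1 b - θ01 b * φ b) / 2) :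
    FK = -2 * (DK - 1) := by
  obtain ⟨hθa, hθ1a⟩ := hθ.apply_left hab.le
  obtain ⟨hφa, hφ1a⟩ := hφ.apply_left hab.le
  have hWz := hθ.wronskian_eq hab.le hφ
  have hW0 := hθ0.wronskian_eq hab.le hφ0
  rw [hFK, hV1, hV1, hV2, hV2, hDK, hθa, hθ1a, hφa, hφ1a]
  linear_combination hWz + hW0

theorem statement6 (a b : ℝ) (hab : a < b) (p q r : ℝ → ℝ)
    (hpqr : Hyp31 a b p q r) (z : ℂ)
    (θ0 θ01 φ0 φ01 θ θ1 φ φ1 : ℝ → ℂ)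
    (hθ0 : IsIntegratedSol a b p q r 0 θ0 θ01 1 0)
    (hφ0 : IsIntegratedSol a b p q r 0 φ0 φ01 0 1)
    (hθ : IsIntegratedSol a b p q r z θ θ1 1 0)
    (hφ : IsIntegratedSol a b p q r z φ φ1 0 1)
    (V1 V2 : (ℝ → ℂ) → (ℝ → ℂ) → ℂ)
    (hV1 : ∀ g g1 : ℝ → ℂ, V1 g g1 = g b - θ0 b * g a - φ0 b * g1 a)
    (hV2 : ∀ g g1 : ℝ → ℂ, V2 g g1 = g1 b - θ01 b * g a - φ01 b * g1 a)
    (FK DK : ℂ)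
    (hFK : FK = V1 θ θ1 * V2 φ φ1 - V2 θ θ1 * V1 φ φ1)
    (hDK : DK = (φ01 b * θ b + θ0 b * φ1 b - φ0 b * θ1 b - θ01 b * φ b) / 2) :
    FK = -2 * (DK - 1) :=
  statement6_general a b hab p q r z θ0 θ01 φ0 φ01 θ θ1 φ φ1 hθ0 hφ0 hθ hφ V1 V2 hV1 hV2 FK DK hFK
    hDK
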